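/- arXiv:1807.08331 — 3 statements merged into one kernel-verified Lean document; each statement's English description precedes it below -/
import Mathlib

section
/- Let G be a graph that is the disjoint union of two graphs G1 and G2, each containing distinguished non-adjacent vertex pairs (a1,b1) in G1 and (a2,b2) in G2 respectively, where (a2,b2) is a copy of (a1,b1). Form G' by adding all edges between (V(G1) \ {a1,b1}) and (V(G2) \ {a2,b2}). Then every maximal independent set I of G' satisfies {a1,b1} ⊆ I or {a2,b2} ⊆ I. -/
/-- `I` is an independent set of `G`. -/
def IsIndep {V : Type*} (G : SimpleGraph V) (I : Set V) : Prop :=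
  ∀ x ∈ I, ∀ y ∈ I, ¬ G.Adj x y

/-- `I` is a maximal independent set of `G`. -/
def IsMaximalIndep {V : Type*} (G : SimpleGraph V) (I : Set V) : Prop :=
  IsIndep G I ∧ ∀ v, v ∉ I → ∃ u ∈ I, G.Adj v u

/-- `G'` is built from the disjoint union of `G₁` and `G₂`
(with non-adjacent distinguished pairs `(a₁,b₁)` and `(a₂,b₂)`)
by adding all edges between `V(G₁) \ {a₁,b₁}` and `V(G₂) \ {a₂,b₂}`.
Every maximal independent set `I` of `G'` contains `{a₁,b₁}` or `{a₂,b₂}`. -/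
theorem stmt1 {V₁ V₂ : Type*} (G₁ : SimpleGraph V₁) (G₂ : SimpleGraph V₂)
    (a₁ b₁ : V₁) (a₂ b₂ : V₂)
    (hab₁ : ¬ G₁.Adj a₁ b₁) (hab₂ : ¬ G₂.Adj a₂ b₂)
    (G' : SimpleGraph (V₁ ⊕ V₂))
    (h₁ : ∀ x y : V₁, G'.Adj (.inl x) (.inl y) ↔ G₁.Adj x y)
    (h₂ : ∀ x y : V₂, G'.Adj (.inr x) (.inr y) ↔ G₂.Adj x y)
    (h₃ : ∀ (x : V₁) (y : V₂),
      G'.Adj (.inl x) (.inr y) ↔ (x ≠ a₁ ∧ x ≠ b₁ ∧ y ≠ a₂ ∧ y ≠ b₂))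
    (I : Set (V₁ ⊕ V₂)) (hI : IsMaximalIndep G' I) :
    ({Sum.inl a₁, Sum.inl b₁} : Set (V₁ ⊕ V₂)) ⊆ I ∨
      ({Sum.inr a₂, Sum.inr b₂} : Set (V₁ ⊕ V₂)) ⊆ I := by
  by_contra hcon
  push_neg at hcon
  obtain ⟨hL, hR⟩ := hcon
  -- from hL, some v₁ ∈ {a₁, b₁} with inl v₁ ∉ I
  have key1 : ∃ u₁ : V₁, Sum.inl u₁ ∈ I ∧ u₁ ≠ a₁ ∧ u₁ ≠ b₁ := by
    have : Sum.inl a₁ ∉ I ∨ Sum.inl b₁ ∉ I := by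
      by_contra h; push_neg at h
      exact hL (by rintro x (rfl | rfl) <;> simp [h.1, h.2])
    rcases this with hv | hv
    · obtain ⟨u, huI, hadj⟩ := hI.2 _ hv
      cases u with
      | inl u =>
        refine ⟨u, huI, ?_, ?_⟩
        · rintro rfl; exact G₁.irrefl ((h₁ _ _).1 hadj)
        · rintro rfl; exact hab₁ ((h₁ _ _).1 hadj)
      | inr u => exact absurd rfl ((h₃ _ _).1 hadj).1
    · obtain ⟨u, huI, hadj⟩ := hI.2 _ hv
      cases u with
      | inl u =>
        refine ⟨u, huI, ?_, ?_⟩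
        · rintro rfl; exact hab₁ (((h₁ _ _).1 hadj).symm)
        · rintro rfl; exact G₁.irrefl ((h₁ _ _).1 hadj)
      | inr u => exact absurd rfl ((h₃ _ _).1 hadj).2.1
  have key2 : ∃ u₂ : V₂, Sum.inr u₂ ∈ I ∧ u₂ ≠ a₂ ∧ u₂ ≠ b₂ := by
    have : Sum.inr a₂ ∉ I ∨ Sum.inr b₂ ∉ I := by
      by_contra h; push_neg at h
      exact hR (by rintro x (rfl | rfl) <;> simp [h.1, h.2])
    rcases this with hv | hv
    · obtain ⟨u, huI, hadj⟩ := hI.2 _ hv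
      cases u with
      | inl u => exact absurd rfl ((h₃ _ _).1 hadj.symm).2.2.1
      | inr u =>
        refine ⟨u, huI, ?_, ?_⟩
        · rintro rfl; exact G₂.irrefl ((h₂ _ _).1 hadj)
        · rintro rfl; exact hab₂ ((h₂ _ _).1 hadj)
    · obtain ⟨u, huI, hadj⟩ := hI.2 _ hv
      cases u with
      | inl u => exact absurd rfl ((h₃ _ _).1 hadj.symm).2.2.2
      | inr u =>
        refine ⟨u, huI, ?_, ?_⟩
        · rintro rfl; exact hab₂ (((h₂ _ _).1 hadj).symm)
        · rintro rfl; exact G₂.irrefl ((h₂ _ _).1 hadj)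
  obtain ⟨u₁, hu₁, ha₁, hb₁⟩ := key1
  obtain ⟨u₂, hu₂, ha₂, hb₂⟩ := key2
  exact hI.1 _ hu₁ _ hu₂ ((h₃ _ _).2 ⟨ha₁, hb₁, ha₂, hb₂⟩)
end

section
/- For any positive integers n and c with c² < n/8, there exists a graph on n vertices containing at least n²/(16c²) pairwise edge-disjoint cliques each of size 2c, and containing no clique of size larger than 2c. -/
/-!
Take a prime `p` with `n / (4c) < p ≤ n / (2c)` (Bertrand) and place `2c` disjoint copies of
`𝔽_p` in `Fin n`. For each of the `p²` polynomials `aX + b`, its values at `2c` fixed distinct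
points of `𝔽_p`, read in the respective copies, form a clique of size `2c`; two distinct such
polynomials agree at most once, so these cliques share at most one vertex. Their union is the
complete `2c`-partite graph on the copies, which is `2c`-colourable and so has no larger clique.
-/

open SimpleGraph

theorem SimpleGraph.IsClique.ncard_le_of_colorable {V : Type*} [Finite V] {G : SimpleGraph V}
    {s : Set V} {k : ℕ} (h : G.IsClique s) (hk : G.Colorable k) : s.ncard ≤ k := by
  rw [Set.ncard_eq_toFinset_card s]
  exact IsClique.card_le_of_colorable (by simpa using h) hk

theorem eq_and_eq_of_mul_add_eq_mul_add {F : Type*} [Field F] {a b a' b' x y : F} (hxy : x ≠ y)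
    (hx : a * x + b = a' * x + b') (hy : a * y + b = a' * y + b') : a = a' ∧ b = b' := by
  have ha : a = a' := by
    have : (a - a') * (x - y) = 0 := by linear_combination hx - hy
    simpa [sub_eq_zero, hxy] using this
  subst ha
  exact ⟨rfl, by simpa using hx⟩

section AffineLines

variable {ι F : Type*} [Field F] (e : ι ↪ F)

/-- The graph of `u ↦ a u + b` over the points `e i`, with one vertex in each part `i`. -/
def affineLine (a b : F) : Set (Σ _ : ι, F) :=
  Set.range fun i => ⟨i, a * e i + b⟩

def affineLines : Set (Set (Σ _ : ι, F)) :=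
  Set.range fun ab : F × F => affineLine e ab.1 ab.2

variable {e}

theorem mem_affineLine {a b : F} {x : Σ _ : ι, F} :
    x ∈ affineLine e a b ↔ x.2 = a * e x.1 + b := by
  constructor
  · rintro ⟨i, rfl⟩
    rfl
  · obtain ⟨i, v⟩ := x
    rintro (h : v = a * e i + b)
    exact ⟨i, h ▸ rfl⟩

variable (e)

theorem isClique_affineLine (a b : F) :
    (completeMultipartiteGraph fun _ : ι => F).IsClique (affineLine e a b) := by
  rintro _ ⟨i, rfl⟩ _ ⟨j, rfl⟩ hne
  exact fun hij => hne (by subst hij; rfl)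

theorem ncard_affineLine [Finite ι] (a b : F) : (affineLine e a b).ncard = Nat.card ι := by
  rw [affineLine, ← Set.image_univ,
    Set.ncard_image_of_injective _ fun i j h => congrArg Sigma.fst h, Set.ncard_univ]

theorem affineLine_inter_subsingleton {a b a' b' : F} (hne : (a, b) ≠ (a', b')) :
    (affineLine e a b ∩ affineLine e a' b').Subsingleton := by
  rintro _ ⟨⟨i, rfl⟩, hi⟩ _ ⟨⟨j, rfl⟩, hj⟩
  rw [mem_affineLine] at hi hj
  by_contra hij
  have hij : i ≠ j := fun h => hij (by subst h; rfl)
  obtain ⟨rfl, rfl⟩ := eq_and_eq_of_mul_add_eq_mul_add (e.injective.ne hij) hi hj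
  exact hne rfl

theorem affineLine_injective [Nontrivial ι] :
    Function.Injective fun ab : F × F => affineLine e ab.1 ab.2 := by
  rintro ⟨a, b⟩ ⟨a', b'⟩ hab
  obtain ⟨i, j, hij⟩ := exists_pair_ne ι
  have hab : affineLine e a b = affineLine e a' b' := hab
  have hmem : ∀ k, a * e k + b = a' * e k + b' := fun k =>
    mem_affineLine.1 (hab ▸ ⟨k, rfl⟩ : (⟨k, a * e k + b⟩ : Σ _ : ι, F) ∈ affineLine e a' b')
  obtain ⟨rfl, rfl⟩ := eq_and_eq_of_mul_add_eq_mul_add (e.injective.ne hij) (hmem i) (hmem j)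
  rfl

theorem ncard_affineLines [Finite F] [Nontrivial ι] : (affineLines e).ncard = Nat.card F ^ 2 := by
  rw [affineLines, ← Set.image_univ, Set.ncard_image_of_injective _ (affineLine_injective e),
    Set.ncard_univ, Nat.card_prod, sq]

end AffineLines

theorem exists_prime_mul_le_lt_two_mul {k n : ℕ} (hk : 0 < k) (hkn : 2 * k ^ 2 ≤ n) :
    ∃ p, p.Prime ∧ k ≤ p ∧ k * p ≤ n ∧ n < 2 * k * p := by
  set m := n / (2 * k)
  have hkm : k ≤ m := (Nat.le_div_iff_mul_le (by omega)).2 (by nlinarith)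
  obtain ⟨p, hp, hmp, hpm⟩ := Nat.exists_prime_lt_and_le_two_mul m (by omega)
  refine ⟨p, hp, hkm.trans hmp.le, ?_, ?_⟩
  · calc k * p ≤ k * (2 * m) := Nat.mul_le_mul_left _ hpm
      _ = m * (2 * k) := by ring
      _ ≤ n := Nat.div_mul_le_self n (2 * k)
  · calc n < 2 * k * (m + 1) := Nat.lt_mul_div_succ n (by omega)
      _ ≤ 2 * k * p := Nat.mul_le_mul_left _ hmp

theorem stmt5_general (n c : ℕ) (hc : 0 < c) (h : 8 * c ^ 2 < n) :
    ∃ (G : SimpleGraph (Fin n)) (𝒦 : Set (Set (Fin n))),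
      (n : ℝ) ^ 2 / (16 * (c : ℝ) ^ 2) ≤ (𝒦.ncard : ℝ) ∧
      (∀ K ∈ 𝒦, G.IsClique K ∧ K.ncard = 2 * c) ∧
      (∀ K ∈ 𝒦, ∀ K' ∈ 𝒦, K ≠ K' → (K ∩ K').Subsingleton) ∧
      (∀ s : Set (Fin n), G.IsClique s → s.ncard ≤ 2 * c) := by
  obtain ⟨p, hp, hcp, hpn, hnp⟩ :=
    exists_prime_mul_le_lt_two_mul (k := 2 * c) (by omega) (by nlinarith)
  have := Fact.mk hp
  obtain ⟨e⟩ : Nonempty (Fin (2 * c) ↪ ZMod p) :=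
    Function.Embedding.nonempty_of_card_le (by simpa using hcp)
  obtain ⟨f⟩ : Nonempty ((Σ _ : Fin (2 * c), ZMod p) ↪ Fin n) :=
    Function.Embedding.nonempty_of_card_le (by simpa using hpn)
  have : Nontrivial (Fin (2 * c)) := Fin.nontrivial_iff_two_le.2 (by omega)
  refine ⟨(completeMultipartiteGraph fun _ => ZMod p).map f, (f '' ·) '' affineLines e,
    ?_, ?_, ?_, ?_⟩
  · rw [Set.ncard_image_of_injective _ (Set.image_injective.2 f.injective), ncard_affineLines,
      Nat.card_zmod, div_le_iff₀ (by positivity)]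
    have : (n : ℝ) < 4 * c * p := by exact_mod_cast (by linarith : n < 4 * c * p)
    push_cast
    nlinarith
  · rintro _ ⟨_, ⟨⟨a, b⟩, rfl⟩, rfl⟩
    refine ⟨(isClique_affineLine e a b).map, ?_⟩
    rw [Set.ncard_image_of_injective _ f.injective, ncard_affineLine, Nat.card_eq_fintype_card,
      Fintype.card_fin]
  · rintro _ ⟨_, ⟨⟨a, b⟩, rfl⟩, rfl⟩ _ ⟨_, ⟨⟨a', b'⟩, rfl⟩, rfl⟩ hne
    rw [← Set.image_inter f.injective]
    exact (affineLine_inter_subsingleton e fun hab => hne (by cases hab; rfl)).image f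
  · intro s hs
    have : NeZero (2 * c) := ⟨by omega⟩
    simpa using hs.ncard_le_of_colorable ((completeMultipartiteGraph.colorable _).map f)

/-- for positive integers `n`, `c` with `c² < n/8` there is a graph
on `n` vertices containing at least `n²/(16c²)` pairwise edge-disjoint cliques,
each of size `2c`, and containing no clique of size larger than `2c`. -/
theorem stmt5 (n c : ℕ) (hn : 0 < n) (hc : 0 < c) (h : 8 * c ^ 2 < n) :
    ∃ (G : SimpleGraph (Fin n)) (𝒦 : Set (Set (Fin n))),
      (n : ℝ) ^ 2 / (16 * (c : ℝ) ^ 2) ≤ (𝒦.ncard : ℝ) ∧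
      (∀ K ∈ 𝒦, G.IsClique K ∧ K.ncard = 2 * c) ∧
      (∀ K ∈ 𝒦, ∀ K' ∈ 𝒦, K ≠ K' → (K ∩ K').Subsingleton) ∧
      (∀ s : Set (Fin n), G.IsClique s → s.ncard ≤ 2 * c) :=
  stmt5_general n c hc h
end

section
/- Consider the plane partitioned into half-open 3w × 2w rectangles ('strips') in six shifted ways: shifts (x,y) with x ∈ {0, w, 2w} and y ∈ {0, w}. Every closed axis-parallel square of side w is fully contained in a single strip in at least 2 of the 6 shifted partitionings. -/
/-- The closed square of side `w` with lower-left corner `(a,b)` is fully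
contained in one of the half-open `3w × 2w` strips of the partition of the
plane shifted by `(x,y)`. -/
def fitsStrip (w a b x y : ℝ) : Prop :=
  ∃ i j : ℤ, 3 * w * i + x ≤ a ∧ a + w < 3 * w * (i + 1) + x ∧
    2 * w * j + y ≤ b ∧ b + w < 2 * w * (j + 1) + y

/-- among the six shifted partitionings of the plane into
half-open `3w × 2w` strips (shifts `x ∈ {0, w, 2w}`, `y ∈ {0, w}`), every
closed square of side `w` is fully contained in a single strip for at least
two of them. -/
theorem stmt11 (w : ℝ) (hw : 0 < w) (a b : ℝ) :
    ∃ s t : Fin 3 × Fin 2, s ≠ t ∧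
      fitsStrip w a b ((s.1.val : ℝ) * w) ((s.2.val : ℝ) * w) ∧
      fitsStrip w a b ((t.1.val : ℝ) * w) ((t.2.val : ℝ) * w) := by
  have h3w : (0:ℝ) < 3 * w := by linarith
  have h2w : (0:ℝ) < 2 * w := by linarith
  set m : ℤ := ⌊a / (3 * w)⌋ with hm
  set n : ℤ := ⌊b / (2 * w)⌋ with hn
  have hm1 : 3 * w * (m:ℝ) ≤ a := by
    have h := Int.floor_le (a / (3 * w))
    rw [← hm] at h
    nlinarith [(le_div_iff₀ h3w).mp h]
  have hm2 : a < 3 * w * ((m:ℝ) + 1) := by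
    have h := Int.lt_floor_add_one (a / (3 * w))
    rw [← hm] at h
    nlinarith [(div_lt_iff₀ h3w).mp h]
  have hn1 : 2 * w * (n:ℝ) ≤ b := by
    have h := Int.floor_le (b / (2 * w))
    rw [← hn] at h
    nlinarith [(le_div_iff₀ h2w).mp h]
  have hn2 : b < 2 * w * ((n:ℝ) + 1) := by
    have h := Int.lt_floor_add_one (b / (2 * w))
    rw [← hn] at h
    nlinarith [(div_lt_iff₀ h2w).mp h]
  -- vertical: pick c : Fin 2 and j
  obtain ⟨c, j, hv1, hv2⟩ :
      ∃ c : Fin 2, ∃ j : ℤ, 2 * w * (j:ℝ) + (c.val : ℝ) * w ≤ b ∧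
        b + w < 2 * w * ((j:ℝ) + 1) + (c.val : ℝ) * w := by
    by_cases hb : b < 2 * w * (n:ℝ) + w
    · refine ⟨0, n, ?_, ?_⟩ <;> simp only [Fin.val_zero] <;> push_cast <;> linarith
    · refine ⟨1, n, ?_, ?_⟩ <;> simp only [Fin.val_one] <;> push_cast <;> linarith
  -- horizontal: two distinct c1 c2 : Fin 3 with witnesses
  obtain ⟨c1, c2, hne, ⟨i1, hh1, hh2⟩, ⟨i2, hh3, hh4⟩⟩ :
      ∃ c1 c2 : Fin 3, c1 ≠ c2 ∧
        (∃ i : ℤ, 3 * w * (i:ℝ) + (c1.val : ℝ) * w ≤ a ∧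
          a + w < 3 * w * ((i:ℝ) + 1) + (c1.val : ℝ) * w) ∧
        (∃ i : ℤ, 3 * w * (i:ℝ) + (c2.val : ℝ) * w ≤ a ∧
          a + w < 3 * w * ((i:ℝ) + 1) + (c2.val : ℝ) * w) := by
    have hv0 : ((0 : Fin 3).val : ℝ) = 0 := by norm_num
    have hv1' : ((1 : Fin 3).val : ℝ) = 1 := by norm_num
    have hv2' : ((2 : Fin 3).val : ℝ) = 2 := by norm_num
    by_cases h1 : a < 3 * w * (m:ℝ) + w
    · refine ⟨0, 2, by decide, ⟨m, ?_, ?_⟩, ⟨m - 1, ?_, ?_⟩⟩ <;>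
        simp only [hv0, hv2'] <;> push_cast <;> linarith
    · by_cases h2 : a < 3 * w * (m:ℝ) + 2 * w
      · refine ⟨0, 1, by decide, ⟨m, ?_, ?_⟩, ⟨m, ?_, ?_⟩⟩ <;>
          simp only [hv0, hv1'] <;> push_cast <;> linarith
      · refine ⟨1, 2, by decide, ⟨m, ?_, ?_⟩, ⟨m, ?_, ?_⟩⟩ <;>
          simp only [hv1', hv2'] <;> push_cast <;> linarith
  refine ⟨(c1, c), (c2, c), ?_, ⟨i1, j, hh1, hh2, hv1, hv2⟩, ⟨i2, j, hh3, hh4, hv1, hv2⟩⟩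
  simp [Prod.ext_iff, hne]
end
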